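/- Let μ, r ∈ ℝ, σ > 0, λ > 0, T > 0, β ∈ [0,∞), ε ∈ [0,1). Let û be the unique bounded continuous function on [0,T]×ℝ satisfying û = φ(û), where φ(f)(t,z) := ∫_t^T e^{−λ(s−t)} ∫_ℝ K_f(s, z + (μ−r−σ²/2)(s−t) + σ√(s−t)·w) dγ(w) ds, K_f(s,z) := (μ−r)h(z) + r − (σ²/2)h(z)² + λ·sup_{ζ∈ℝ}( f(s,ζ) − ln((1+β·h(ζ))/(1+β·h(z)))·1_{z<ζ} − ln((1−ε·h(ζ))/(1−ε·h(z)))·1_{z>ζ} ), h(z) := e^z/(1+e^z), and γ the standard Gaussian measure on ℝ. Then there exists a constant C ≥ 0 such that for all t, t' ∈ [0,T] and all z, z' ∈ ℝ, |K_û(t',z') − K_û(t,z)| ≤ C·( |t' − t|^{1/2} + |z' − z| ); in particular K_û is 1/2-Hölder continuous in the time variable and Lipschitz continuous in the space variable. -/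

import Mathlib

open Set MeasureTheory ProbabilityTheory

/-- The logistic function `h(z) = e^z / (1 + e^z)`. -/
noncomputable def logistic (z : ℝ) : ℝ := Real.exp z / (1 + Real.exp z)

/-- The nonlinear term `K_f(s,z)` of the transformed HJB equation. -/
noncomputable def Knl (μ r σ lam β ε : ℝ) (f : ℝ → ℝ → ℝ) (s z : ℝ) : ℝ :=
  (μ - r) * logistic z + r - σ^2 / 2 * (logistic z)^2
    + lam * ⨆ ζ : ℝ, (f s ζ
        - Real.log ((1 + β * logistic ζ) / (1 + β * logistic z)) * (if z < ζ then 1 else 0)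
        - Real.log ((1 - ε * logistic ζ) / (1 - ε * logistic z)) * (if ζ < z then 1 else 0))

/-- The map `φ`: `φ(f)(t,z) = ∫_t^T e^{-λ(s-t)} E[ K_f(s, Z_s^{(t,z)}) ] ds`. -/
noncomputable def phiMap (μ r σ lam β ε T : ℝ) (f : ℝ → ℝ → ℝ) (t z : ℝ) : ℝ :=
  ∫ s in t..T, Real.exp (-lam * (s - t)) *
    ∫ w, Knl μ r σ lam β ε f s
        (z + (μ - r - σ^2 / 2) * (s - t) + σ * Real.sqrt (s - t) * w)
      ∂(gaussianReal 0 1)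


set_option maxHeartbeats 1000000

namespace KH


lemma one_add_exp_pos (x : ℝ) : (0:ℝ) < 1 + Real.exp x := by positivity

lemma logistic_pos (x : ℝ) : 0 < logistic x := by
  unfold logistic; positivity

lemma logistic_lt_one (x : ℝ) : logistic x < 1 := by
  unfold logistic
  rw [div_lt_one (one_add_exp_pos x)]; linarith

lemma logistic_nonneg (x : ℝ) : 0 ≤ logistic x := (logistic_pos x).le
lemma logistic_le_one (x : ℝ) : logistic x ≤ 1 := (logistic_lt_one x).le

lemma logistic_mono {x y : ℝ} (h : x ≤ y) : logistic x ≤ logistic y := by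
  unfold logistic
  rw [div_le_div_iff₀ (one_add_exp_pos x) (one_add_exp_pos y)]
  have := Real.exp_le_exp.2 h
  nlinarith [Real.exp_pos x, Real.exp_pos y]

lemma logistic_sub_le {x y : ℝ} (h : x ≤ y) : logistic y - logistic x ≤ y - x := by
  have hE : Real.exp y - Real.exp x ≤ (y - x) * Real.exp y := by
    have h1 : (x - y) + 1 ≤ Real.exp (x - y) := Real.add_one_le_exp _
    have h2 : Real.exp (x - y) * Real.exp y = Real.exp x := by
      rw [← Real.exp_add]; ring_nf
    nlinarith [Real.exp_pos y]
  have hx := one_add_exp_pos x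
  have hy := one_add_exp_pos y
  have hkey : logistic y - logistic x = (Real.exp y - Real.exp x) / ((1 + Real.exp x) * (1 + Real.exp y)) := by
    unfold logistic; field_simp; ring
  rw [hkey, div_le_iff₀ (by positivity)]
  have hEy : Real.exp y ≤ (1 + Real.exp x) * (1 + Real.exp y) := by
    nlinarith [Real.exp_pos x, Real.exp_pos y]
  nlinarith [sub_nonneg.2 h]

lemma abs_logistic_sub (x y : ℝ) : |logistic x - logistic y| ≤ |x - y| := by
  rcases le_total x y with h | h
  · rw [abs_sub_comm, abs_of_nonneg (sub_nonneg.2 (logistic_mono h)),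
      abs_sub_comm, abs_of_nonneg (sub_nonneg.2 h)]
    exact logistic_sub_le h
  · rw [abs_of_nonneg (sub_nonneg.2 (logistic_mono h)), abs_of_nonneg (sub_nonneg.2 h)]
    exact logistic_sub_le h

lemma abs_log_sub_log_le {c a b : ℝ} (hc : 0 < c) (ha : c ≤ a) (hb : c ≤ b) :
    |Real.log a - Real.log b| ≤ |a - b| / c := by
  have key : ∀ p q : ℝ, c ≤ p → c ≤ q → q ≤ p → Real.log p - Real.log q ≤ (p - q) / c := by
    intro p q hp hq hpq
    have hq0 : 0 < q := lt_of_lt_of_le hc hq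
    have hp0 : 0 < p := lt_of_lt_of_le hc hp
    rw [← Real.log_div (ne_of_gt hp0) (ne_of_gt hq0)]
    have h1 : Real.log (p / q) ≤ p / q - 1 := Real.log_le_sub_one_of_pos (by positivity)
    have h2 : p / q - 1 = (p - q) / q := by field_simp
    have h3 : (p - q) / q ≤ (p - q) / c := by
      apply div_le_div_of_nonneg_left (by linarith) hc hq
    linarith
  rcases le_total b a with h | h
  · rw [abs_of_nonneg (sub_nonneg.2 (Real.log_le_log (lt_of_lt_of_le hc hb) h)),
      abs_of_nonneg (sub_nonneg.2 h)]
    exact key a b ha hb h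
  · rw [abs_sub_comm, abs_of_nonneg (sub_nonneg.2 (Real.log_le_log (lt_of_lt_of_le hc ha) h)),
      abs_sub_comm (a : ℝ), abs_of_nonneg (sub_nonneg.2 h)]
    exact key b a hb ha h



-- placeholders for already-proven lemmas

noncomputable def b1 (β y : ℝ) : ℝ := Real.log (1 + β * logistic y)
noncomputable def b2 (ε y : ℝ) : ℝ := Real.log (1 - ε * logistic y)
noncomputable def Afn (β ε ζ z : ℝ) : ℝ :=
  (b1 β ζ - b1 β (min z ζ)) + (b2 ε ζ - b2 ε (max z ζ))

section be
variable {β ε : ℝ} (hβ : 0 ≤ β) (hε0 : 0 ≤ ε) (hε1 : ε < 1)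

include hβ in
lemma one_le_b1_arg (y : ℝ) : 1 ≤ 1 + β * logistic y := by
  nlinarith [logistic_pos y, logistic_lt_one y]

include hε0 hε1 in
lemma b2_arg_ge (y : ℝ) : 1 - ε ≤ 1 - ε * logistic y := by
  nlinarith [logistic_pos y, logistic_lt_one y]

include hβ in
lemma abs_b1_sub (x y : ℝ) : |b1 β x - b1 β y| ≤ β * |x - y| := by
  have h := abs_log_sub_log_le one_pos (one_le_b1_arg hβ x) (one_le_b1_arg hβ y)
  unfold b1
  refine h.trans ?_
  rw [div_one]
  have : (1 + β * logistic x) - (1 + β * logistic y) = β * (logistic x - logistic y) := by ring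
  rw [this, abs_mul, abs_of_nonneg hβ]
  exact mul_le_mul_of_nonneg_left (abs_logistic_sub x y) hβ

include hε0 hε1 in
lemma abs_b2_sub (x y : ℝ) : |b2 ε x - b2 ε y| ≤ (ε / (1 - ε)) * |x - y| := by
  have hc : (0:ℝ) < 1 - ε := by linarith
  have h := abs_log_sub_log_le hc (b2_arg_ge hε0 hε1 x) (b2_arg_ge hε0 hε1 y)
  unfold b2
  refine h.trans ?_
  have : (1 - ε * logistic x) - (1 - ε * logistic y) = ε * (logistic y - logistic x) := by ring
  rw [this, abs_mul, abs_of_nonneg hε0]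
  have h1 : |logistic y - logistic x| ≤ |x - y| := by
    rw [abs_sub_comm]; exact abs_logistic_sub x y
  have h2 : (ε / (1 - ε)) * |x - y| = ε * |x - y| / (1 - ε) := by ring
  rw [h2]
  have h3 : ε * |logistic y - logistic x| ≤ ε * |x - y| := by
    exact mul_le_mul_of_nonneg_left h1 hε0
  calc ε * |logistic y - logistic x| / (1 - ε) ≤ ε * |x - y| / (1 - ε) := by gcongr
    _ = ε * |x - y| / (1 - ε) := rfl

include hβ in
lemma b1_mem (y : ℝ) : 0 ≤ b1 β y ∧ b1 β y ≤ Real.log (1 + β) := by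
  constructor
  · exact Real.log_nonneg (one_le_b1_arg hβ y)
  · apply Real.log_le_log (by nlinarith [logistic_pos y, logistic_lt_one y])
    nlinarith [logistic_pos y, logistic_lt_one y]

include hβ in
lemma abs_b1_sub_le (x y : ℝ) : |b1 β x - b1 β y| ≤ Real.log (1 + β) := by
  have hx := b1_mem hβ x
  have hy := b1_mem hβ y
  rw [abs_le]; constructor <;> linarith

include hε0 hε1 in
lemma b2_mem (y : ℝ) : Real.log (1 - ε) ≤ b2 ε y ∧ b2 ε y ≤ 0 := by
  have hc : (0:ℝ) < 1 - ε := by linarith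
  constructor
  · exact Real.log_le_log hc (b2_arg_ge hε0 hε1 y)
  · apply Real.log_nonpos (by nlinarith [logistic_pos y, logistic_lt_one y])
    nlinarith [logistic_pos y]

include hε0 hε1 in
lemma abs_b2_sub_le (x y : ℝ) : |b2 ε x - b2 ε y| ≤ -Real.log (1 - ε) := by
  have hx := b2_mem hε0 hε1 x
  have hy := b2_mem hε0 hε1 y
  rw [abs_le]; constructor <;> linarith

include hβ hε0 hε1 in
lemma abs_Afn_le (ζ z : ℝ) : |Afn β ε ζ z| ≤ Real.log (1 + β) - Real.log (1 - ε) := by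
  unfold Afn
  calc |(b1 β ζ - b1 β (min z ζ)) + (b2 ε ζ - b2 ε (max z ζ))|
      ≤ |b1 β ζ - b1 β (min z ζ)| + |b2 ε ζ - b2 ε (max z ζ)| := abs_add_le _ _
    _ ≤ Real.log (1 + β) + -Real.log (1 - ε) :=
        add_le_add (abs_b1_sub_le hβ _ _) (abs_b2_sub_le hε0 hε1 _ _)
    _ = _ := by ring

lemma abs_min_sub_min (a b c : ℝ) : |min a c - min b c| ≤ |a - b| := by
  rcases le_total a c with h1 | h1 <;> rcases le_total b c with h2 | h2
  · rw [min_eq_left h1, min_eq_left h2]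
  · rw [min_eq_left h1, min_eq_right h2, abs_le]
    constructor <;> linarith [le_abs_self (a - b), neg_abs_le (a - b), abs_nonneg (a - b)]
  · rw [min_eq_right h1, min_eq_left h2, abs_le]
    constructor <;> linarith [le_abs_self (a - b), neg_abs_le (a - b), abs_nonneg (a - b)]
  · rw [min_eq_right h1, min_eq_right h2]
    simp [abs_nonneg]

lemma abs_max_sub_max (a b c : ℝ) : |max a c - max b c| ≤ |a - b| := by
  rcases le_total a c with h1 | h1 <;> rcases le_total b c with h2 | h2
  · rw [max_eq_right h1, max_eq_right h2]
    simp [abs_nonneg]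
  · rw [max_eq_right h1, max_eq_left h2, abs_le]
    constructor <;> linarith [le_abs_self (a - b), neg_abs_le (a - b), abs_nonneg (a - b)]
  · rw [max_eq_left h1, max_eq_right h2, abs_le]
    constructor <;> linarith [le_abs_self (a - b), neg_abs_le (a - b), abs_nonneg (a - b)]
  · rw [max_eq_left h1, max_eq_left h2]

include hβ hε0 hε1 in
lemma abs_Afn_sub (ζ z z' : ℝ) :
    |Afn β ε ζ z' - Afn β ε ζ z| ≤ (β + ε / (1 - ε)) * |z' - z| := by
  have h1 : Afn β ε ζ z' - Afn β ε ζ z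
      = (b1 β (min z ζ) - b1 β (min z' ζ)) + (b2 ε (max z ζ) - b2 ε (max z' ζ)) := by
    unfold Afn; ring
  rw [h1]
  calc |(b1 β (min z ζ) - b1 β (min z' ζ)) + (b2 ε (max z ζ) - b2 ε (max z' ζ))|
      ≤ |b1 β (min z ζ) - b1 β (min z' ζ)| + |b2 ε (max z ζ) - b2 ε (max z' ζ)| := abs_add_le _ _
    _ ≤ β * |min z ζ - min z' ζ| + (ε / (1 - ε)) * |max z ζ - max z' ζ| :=
        add_le_add (abs_b1_sub hβ _ _) (abs_b2_sub hε0 hε1 _ _)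
    _ ≤ β * |z - z'| + (ε / (1 - ε)) * |z - z'| :=
        add_le_add (mul_le_mul_of_nonneg_left (abs_min_sub_min _ _ _) hβ)
          (mul_le_mul_of_nonneg_left (abs_max_sub_max _ _ _) (div_nonneg hε0 (by linarith)))
    _ = (β + ε / (1 - ε)) * |z' - z| := by rw [abs_sub_comm]; ring

include hβ hε0 hε1 in
lemma inner_eq (f : ℝ → ℝ) (ζ z : ℝ) :
    f ζ - Real.log ((1 + β * logistic ζ) / (1 + β * logistic z)) * (if z < ζ then 1 else 0)
        - Real.log ((1 - ε * logistic ζ) / (1 - ε * logistic z)) * (if ζ < z then 1 else 0)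
      = f ζ - Afn β ε ζ z := by
  have hb1z : (0:ℝ) < 1 + β * logistic z := lt_of_lt_of_le one_pos (one_le_b1_arg hβ z)
  have hb1ζ : (0:ℝ) < 1 + β * logistic ζ := lt_of_lt_of_le one_pos (one_le_b1_arg hβ ζ)
  have hc : (0:ℝ) < 1 - ε := by linarith
  have hb2z : (0:ℝ) < 1 - ε * logistic z := lt_of_lt_of_le hc (b2_arg_ge hε0 hε1 z)
  have hb2ζ : (0:ℝ) < 1 - ε * logistic ζ := lt_of_lt_of_le hc (b2_arg_ge hε0 hε1 ζ)
  have e1 : Real.log ((1 + β * logistic ζ) / (1 + β * logistic z)) = b1 β ζ - b1 β z :=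
    Real.log_div (ne_of_gt hb1ζ) (ne_of_gt hb1z)
  have e2 : Real.log ((1 - ε * logistic ζ) / (1 - ε * logistic z)) = b2 ε ζ - b2 ε z :=
    Real.log_div (ne_of_gt hb2ζ) (ne_of_gt hb2z)
  rw [e1, e2]
  unfold Afn
  rcases lt_trichotomy z ζ with h | h | h
  · rw [if_pos h, if_neg (not_lt.2 h.le), min_eq_left h.le, max_eq_right h.le]; ring
  · subst h; simp
  · rw [if_neg (not_lt.2 h.le), if_pos h, min_eq_right h.le, max_eq_left h.le]; ring

end be

lemma ciSup_abs_sub {f g : ℝ → ℝ} (hf : BddAbove (range f)) (hg : BddAbove (range g))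
    {c : ℝ} (h : ∀ ζ, |f ζ - g ζ| ≤ c) : |(⨆ ζ, f ζ) - ⨆ ζ, g ζ| ≤ c := by
  rw [abs_sub_le_iff]
  constructor
  · rw [sub_le_iff_le_add]
    apply ciSup_le
    intro ζ
    have := abs_le.1 (h ζ)
    have h2 := le_ciSup hg ζ
    linarith [this.2]
  · rw [sub_le_iff_le_add]
    apply ciSup_le
    intro ζ
    have := abs_le.1 (h ζ)
    have h2 := le_ciSup hf ζ
    linarith [this.1]

lemma bddAbove_of_abs_le {f : ℝ → ℝ} {M : ℝ} (h : ∀ ζ, |f ζ| ≤ M) : BddAbove (range f) :=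
  ⟨M, by rintro _ ⟨ζ, rfl⟩; exact (abs_le.1 (h ζ)).2⟩

lemma abs_ciSup_le {f : ℝ → ℝ} {M : ℝ} (h : ∀ ζ, |f ζ| ≤ M) : |⨆ ζ, f ζ| ≤ M := by
  rw [abs_le]
  constructor
  · exact le_trans (abs_le.1 (h 0)).1 (le_ciSup (bddAbove_of_abs_le h) 0)
  · exact ciSup_le fun ζ => (abs_le.1 (h ζ)).2

lemma ciSup_rat_eq {f : ℝ → ℝ} (hf : Continuous f) (hb : BddAbove (range f)) :
    (⨆ x : ℝ, f x) = ⨆ q : ℚ, f q := by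
  have hbq : BddAbove (range fun q : ℚ => f q) := by
    obtain ⟨M, hM⟩ := hb
    exact ⟨M, by rintro _ ⟨q, rfl⟩; exact hM ⟨q, rfl⟩⟩
  apply le_antisymm
  · apply ciSup_le
    intro x
    obtain ⟨s, hs, hlim⟩ := mem_closure_iff_seq_limit.1 (Rat.denseRange_cast (𝕜 := ℝ) x)
    have : Filter.Tendsto (fun n => f (s n)) Filter.atTop (nhds (f x)) :=
      (hf.tendsto x).comp hlim
    apply le_of_tendsto this
    filter_upwards with n
    obtain ⟨q, hq⟩ := hs n
    rw [← hq]
    exact le_ciSup hbq q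
  · exact ciSup_le fun q => le_ciSup hb (q : ℝ)



lemma integrable_abs_gaussian : Integrable (fun w : ℝ => |w|) (gaussianReal 0 1) := by
  rw [gaussianReal_of_var_ne_zero 0 one_ne_zero]
  rw [integrable_withDensity_iff (measurable_gaussianPDF 0 1)
    (Filter.Eventually.of_forall fun x => ENNReal.ofReal_lt_top)]
  have : Integrable (fun x : ℝ => x * Real.exp (-(2⁻¹ : ℝ) * x ^ 2)) := by
    exact integrable_mul_exp_neg_mul_sq (by norm_num)
  have habs := this.abs
  apply Integrable.mono' (habs.const_mul ((Real.sqrt (2 * Real.pi))⁻¹))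
  · apply Measurable.aestronglyMeasurable
    apply (measurable_id.abs).mul
    exact (measurable_gaussianPDF 0 1).ennreal_toReal
  · filter_upwards with x
    rw [Real.norm_eq_abs, abs_mul, abs_abs]
    unfold gaussianPDF
    rw [ENNReal.toReal_ofReal (gaussianPDFReal_nonneg 0 1 x), abs_of_nonneg (gaussianPDFReal_nonneg 0 1 x)]
    unfold gaussianPDFReal
    apply le_of_eq
    rw [abs_mul, abs_of_nonneg (Real.exp_pos _).le]
    push_cast
    rw [mul_one, sub_zero]
    have hx : -x ^ 2 / (2 * 1) = -2⁻¹ * x ^ 2 := by ring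
    rw [hx]
    ring

noncomputable def Cgauss : ℝ := ∫ w, |w| ∂(gaussianReal 0 1)

lemma Cgauss_nonneg : 0 ≤ Cgauss := integral_nonneg fun w => abs_nonneg w

/-- bound on integral against a probability measure -/
lemma abs_integral_le {γ : Measure ℝ} [IsProbabilityMeasure γ] {f : ℝ → ℝ} {M : ℝ}
    (h : ∀ x, |f x| ≤ M) : |∫ x, f x ∂γ| ≤ M := by
  have := norm_integral_le_of_norm_le
    (integrable_const M : Integrable (fun _ : ℝ => M) γ)
    (Filter.Eventually.of_forall fun x => by rw [Real.norm_eq_abs]; exact h x)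
  rw [Real.norm_eq_abs] at this
  refine this.trans ?_
  simp

lemma sqrt_sub_sqrt_le {a b : ℝ} (h0 : 0 ≤ a) (h : a ≤ b) :
    Real.sqrt b - Real.sqrt a ≤ Real.sqrt (b - a) := by
  rw [sub_le_iff_le_add]
  have h1 : b ≤ (Real.sqrt (b - a) + Real.sqrt a) ^ 2 := by
    rw [add_sq, Real.sq_sqrt (by linarith), Real.sq_sqrt h0]
    have := Real.sqrt_nonneg (b - a)
    have := Real.sqrt_nonneg a
    nlinarith
  calc Real.sqrt b ≤ Real.sqrt ((Real.sqrt (b - a) + Real.sqrt a) ^ 2) := Real.sqrt_le_sqrt h1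
    _ = Real.sqrt (b - a) + Real.sqrt a := by
        rw [Real.sqrt_sq (by positivity)]

lemma exp_sub_exp_le {lam a b : ℝ} (hlam : 0 ≤ lam) (hab : a ≤ b) (ha : 0 ≤ a) :
    |Real.exp (-lam * a) - Real.exp (-lam * b)| ≤ lam * (b - a) := by
  have h1 : Real.exp (-lam * b) ≤ Real.exp (-lam * a) := by
    apply Real.exp_le_exp.2; nlinarith
  rw [abs_of_nonneg (by linarith)]
  have h2 : Real.exp (-lam * a) ≤ 1 := Real.exp_le_one_iff.2 (by nlinarith)
  have h3 : Real.exp (-lam * a) - Real.exp (-lam * b)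
      = Real.exp (-lam * a) * (1 - Real.exp (-lam * (b - a))) := by
    rw [mul_sub, mul_one, ← Real.exp_add]; ring_nf
  rw [h3]
  have h4 : 1 - Real.exp (-lam * (b - a)) ≤ lam * (b - a) := by
    have := Real.add_one_le_exp (-lam * (b - a))
    linarith
  have h5 : 0 ≤ 1 - Real.exp (-lam * (b - a)) := by
    have : Real.exp (-lam * (b - a)) ≤ 1 := Real.exp_le_one_iff.2 (by nlinarith)
    linarith
  nlinarith [Real.exp_pos (-lam * a)]

lemma intervalIntegrable_of_bound {f : ℝ → ℝ} (hm : Measurable f) {a b M : ℝ}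
    (hb : ∀ s ∈ Set.uIoc a b, |f s| ≤ M) : IntervalIntegrable f MeasureTheory.volume a b := by
  rw [intervalIntegrable_iff]
  have hfin : MeasureTheory.volume (Set.uIoc a b) < ⊤ := by
    rw [Set.uIoc]; exact measure_Ioc_lt_top
  apply Integrable.mono' ((integrableOn_const (C := M) hfin.ne))
    hm.aestronglyMeasurable.restrict
  rw [ae_restrict_iff' measurableSet_uIoc]
  filter_upwards with x hx
  rw [Real.norm_eq_abs]
  exact hb x hx





lemma u_time_mod (σ lam T m MK LK : ℝ) (hσ : 0 ≤ σ) (hlam : 0 < lam) (hT : 0 < T)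
    (hMK : 0 ≤ MK) (hLK : 0 ≤ LK)
    (K : ℝ → ℝ → ℝ)
    (hKmeas : Measurable fun p : ℝ × ℝ => K p.1 p.2)
    (hKb : ∀ s x, |K s x| ≤ MK)
    (hKlip : ∀ s x x', |K s x' - K s x| ≤ LK * |x' - x|)
    (z : ℝ) (v : ℝ → ℝ)
    (hv : ∀ a ∈ Icc 0 T, v a = ∫ s in a..T, Real.exp (-lam * (s - a)) *
        ∫ w, K s (z + m * (s - a) + σ * Real.sqrt (s - a) * w) ∂(gaussianReal 0 1))
    {t t' : ℝ} (ht : t ∈ Icc 0 T) (ht' : t' ∈ Icc 0 T) (htt' : t ≤ t') :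
    |v t' - v t| ≤ (Real.sqrt T * (MK + T * (lam * MK + LK * |m|)) + T * LK * σ * Cgauss)
      * Real.sqrt (t' - t) := by
  have h0t : 0 ≤ t := ht.1
  have htT : t ≤ T := ht.2
  have ht'T : t' ≤ T := ht'.2
  set γ : Measure ℝ := gaussianReal 0 1 with hγ
  have hγP : IsProbabilityMeasure γ := by rw [hγ]; infer_instance
  set I : ℝ → ℝ → ℝ := fun a s =>
    ∫ w, K s (z + m * (s - a) + σ * Real.sqrt (s - a) * w) ∂γ with hIdef
  set F : ℝ → ℝ → ℝ := fun a s => Real.exp (-lam * (s - a)) * I a s with hFdef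
  set δ : ℝ := t' - t with hδdef
  have hδ0 : 0 ≤ δ := by simp [hδdef]; linarith
  have hδT : δ ≤ T := by simp [hδdef]; linarith
  -- measurability of F a
  have haffm : ∀ a s : ℝ, Measurable fun w : ℝ =>
      z + m * (s - a) + σ * Real.sqrt (s - a) * w := by
    intro a s
    exact (measurable_id.const_mul _).const_add _
  have hsecm : ∀ a s : ℝ, Measurable fun w : ℝ =>
      K s (z + m * (s - a) + σ * Real.sqrt (s - a) * w) := by
    intro a s
    exact hKmeas.comp (measurable_const.prodMk (haffm a s))
  have hsecint : ∀ a s : ℝ, Integrable (fun w : ℝ =>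
      K s (z + m * (s - a) + σ * Real.sqrt (s - a) * w)) γ := by
    intro a s
    apply Integrable.mono' (integrable_const MK) (hsecm a s).aestronglyMeasurable
    filter_upwards with w
    rw [Real.norm_eq_abs]
    exact hKb s _
  have hFmeas : ∀ a : ℝ, Measurable (F a) := by
    intro a
    apply Measurable.mul
    · exact (Real.continuous_exp.comp (by continuity)).measurable
    · have hjm : Measurable fun p : ℝ × ℝ =>
          K p.1 (z + m * (p.1 - a) + σ * Real.sqrt (p.1 - a) * p.2) := by
        have hc : Continuous fun p : ℝ × ℝ =>
            z + m * (p.1 - a) + σ * Real.sqrt (p.1 - a) * p.2 := by continuity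
        have heq : (fun p : ℝ × ℝ => K p.1 (z + m * (p.1 - a) + σ * Real.sqrt (p.1 - a) * p.2))
            = (fun p : ℝ × ℝ => K p.1 p.2) ∘ (fun p : ℝ × ℝ =>
              (p.1, z + m * (p.1 - a) + σ * Real.sqrt (p.1 - a) * p.2)) := rfl
        rw [heq]
        exact hKmeas.comp (measurable_fst.prodMk hc.measurable)
      have := hjm.stronglyMeasurable.integral_prod_right' (ν := γ)
      exact this.measurable
  have hIb : ∀ a s : ℝ, |I a s| ≤ MK := by
    intro a s
    rw [hIdef]
    exact abs_integral_le (fun w => hKb s _)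
  have hFb : ∀ a s : ℝ, a ≤ s → |F a s| ≤ MK := by
    intro a s has
    rw [hFdef]
    simp only
    rw [abs_mul, abs_of_nonneg (Real.exp_pos _).le]
    have h1 : Real.exp (-lam * (s - a)) ≤ 1 := Real.exp_le_one_iff.2 (by nlinarith)
    have h2 := hIb a s
    nlinarith [abs_nonneg (I a s), Real.exp_pos (-lam * (s - a))]
  have hInt : ∀ a b c : ℝ, a ≤ b → b ≤ c → IntervalIntegrable (F a) MeasureTheory.volume b c := by
    intro a b c hab hbc
    apply intervalIntegrable_of_bound (hFmeas a) (M := MK)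
    intro s hs
    rw [uIoc_of_le hbc] at hs
    exact hFb a s (by linarith [hs.1])
  have e1 : v t = (∫ s in t..t', F t s) + ∫ s in t'..T, F t s := by
    rw [hv t ht]
    exact (intervalIntegral.integral_add_adjacent_intervals
      (hInt t t t' le_rfl htt') (hInt t t' T htt' ht'T)).symm
  have e2 : v t' = ∫ s in t'..T, F t' s := hv t' ht'
  have e3 : v t' - v t = (∫ s in t'..T, (F t' s - F t s)) - ∫ s in t..t', F t s := by
    rw [e1, e2, intervalIntegral.integral_sub (hInt t' t' T le_rfl ht'T) (hInt t t' T htt' ht'T)]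
    ring
  have bound1 : |∫ s in t..t', F t s| ≤ MK * δ := by
    have := intervalIntegral.norm_integral_le_of_norm_le_const (C := MK) (f := F t)
      (a := t) (b := t') (fun x hx => by
        rw [uIoc_of_le htt'] at hx
        rw [Real.norm_eq_abs]
        exact hFb t x (le_of_lt hx.1))
    rw [Real.norm_eq_abs] at this
    refine this.trans ?_
    rw [abs_of_nonneg (by linarith : (0:ℝ) ≤ t' - t)]
  set D2 : ℝ := LK * (|m| * δ) + LK * σ * Real.sqrt δ * Cgauss with hD2def
  set Dd : ℝ := lam * δ * MK + D2 with hDddef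
  have hD20 : 0 ≤ D2 := by
    apply add_nonneg
    · exact mul_nonneg hLK (mul_nonneg (abs_nonneg m) hδ0)
    · exact mul_nonneg (mul_nonneg (mul_nonneg hLK hσ) (Real.sqrt_nonneg δ)) Cgauss_nonneg
  have hDd0 : 0 ≤ Dd := by
    apply add_nonneg _ hD20
    exact mul_nonneg (mul_nonneg hlam.le hδ0) hMK
  have pointwise : ∀ s ∈ Set.uIoc t' T, |F t' s - F t s| ≤ Dd := by
    intro s hs
    rw [uIoc_of_le ht'T] at hs
    have hst' : t' < s := hs.1
    have hsT : s ≤ T := hs.2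
    -- inner integral difference
    have hIdiff : |I t' s - I t s| ≤ D2 := by
      rw [hIdef]
      simp only
      rw [← integral_sub (hsecint t' s) (hsecint t s)]
      have hgint : Integrable (fun w : ℝ => LK * (|m| * δ) + LK * σ * Real.sqrt δ * |w|) γ := by
        apply Integrable.add (integrable_const _)
        rw [hγ]
        exact integrable_abs_gaussian.const_mul _
      have hptw : ∀ w : ℝ, ‖K s (z + m * (s - t') + σ * Real.sqrt (s - t') * w)
          - K s (z + m * (s - t) + σ * Real.sqrt (s - t) * w)‖
          ≤ LK * (|m| * δ) + LK * σ * Real.sqrt δ * |w| := by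
        intro w
        rw [Real.norm_eq_abs]
        refine (hKlip s _ _).trans ?_
        have harg : (z + m * (s - t') + σ * Real.sqrt (s - t') * w)
            - (z + m * (s - t) + σ * Real.sqrt (s - t) * w)
            = m * (t - t') + σ * (Real.sqrt (s - t') - Real.sqrt (s - t)) * w := by ring
        rw [harg]
        have h1 : |m * (t - t') + σ * (Real.sqrt (s - t') - Real.sqrt (s - t)) * w|
            ≤ |m| * δ + σ * Real.sqrt δ * |w| := by
          refine (abs_add_le _ _).trans ?_
          apply add_le_add
          · rw [abs_mul]
            have : |t - t'| = δ := by rw [abs_sub_comm, abs_of_nonneg]; linarith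
            rw [this]
          · rw [abs_mul, abs_mul, abs_of_nonneg hσ]
            have hss : |Real.sqrt (s - t') - Real.sqrt (s - t)| ≤ Real.sqrt δ := by
              rw [abs_sub_comm, abs_of_nonneg (sub_nonneg.2 (Real.sqrt_le_sqrt (by linarith)))]
              have := sqrt_sub_sqrt_le (a := s - t') (b := s - t) (by linarith) (by linarith)
              have heq : s - t - (s - t') = δ := by rw [hδdef]; ring
              rw [heq] at this
              exact this
            have := mul_le_mul_of_nonneg_right hss (abs_nonneg w)
            nlinarith [abs_nonneg w, Real.sqrt_nonneg δ]
        refine (mul_le_mul_of_nonneg_left h1 hLK).trans_eq ?_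
        ring
      have := norm_integral_le_of_norm_le hgint (Filter.Eventually.of_forall hptw)
      rw [Real.norm_eq_abs] at this
      refine this.trans ?_
      rw [integral_add (integrable_const _) (by rw [hγ]; exact integrable_abs_gaussian.const_mul _)]
      rw [integral_const, integral_const_mul]
      have : γ.real univ = 1 := by simp [Measure.real, hγP.measure_univ]
      rw [this, smul_eq_mul, one_mul, hD2def, hγ]
      rw [Cgauss]
    have hexp : |Real.exp (-lam * (s - t')) - Real.exp (-lam * (s - t))| ≤ lam * δ := by
      have := exp_sub_exp_le hlam.le (a := s - t') (b := s - t) (by linarith) (by linarith)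
      have heq : s - t - (s - t') = δ := by rw [hδdef]; ring
      rw [show lam * (s - t - (s - t')) = lam * δ by rw [heq]] at this
      exact this
    have hcomb : F t' s - F t s
        = (Real.exp (-lam * (s - t')) - Real.exp (-lam * (s - t))) * I t' s
          + Real.exp (-lam * (s - t)) * (I t' s - I t s) := by
      rw [hFdef]; simp only; ring
    rw [hcomb]
    have hexp1 : Real.exp (-lam * (s - t)) ≤ 1 := Real.exp_le_one_iff.2 (by nlinarith)
    calc |(Real.exp (-lam * (s - t')) - Real.exp (-lam * (s - t))) * I t' s
          + Real.exp (-lam * (s - t)) * (I t' s - I t s)|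
        ≤ |(Real.exp (-lam * (s - t')) - Real.exp (-lam * (s - t))) * I t' s|
          + |Real.exp (-lam * (s - t)) * (I t' s - I t s)| := abs_add_le _ _
      _ = |Real.exp (-lam * (s - t')) - Real.exp (-lam * (s - t))| * |I t' s|
          + Real.exp (-lam * (s - t)) * |I t' s - I t s| := by
          rw [abs_mul, abs_mul, abs_of_nonneg (Real.exp_pos _).le]
      _ ≤ lam * δ * MK + 1 * D2 := by
          apply add_le_add
          · exact mul_le_mul hexp (hIb t' s) (abs_nonneg _)
              (mul_nonneg hlam.le hδ0)
          · exact mul_le_mul hexp1 hIdiff (abs_nonneg _) one_pos.le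
      _ = Dd := by rw [hDddef]; ring
  have bound2 : |∫ s in t'..T, (F t' s - F t s)| ≤ Dd * (T - t') := by
    have := intervalIntegral.norm_integral_le_of_norm_le_const (C := Dd)
      (f := fun s => F t' s - F t s) (a := t') (b := T)
      (fun x hx => by rw [Real.norm_eq_abs]; exact pointwise x hx)
    rw [Real.norm_eq_abs] at this
    refine this.trans ?_
    rw [abs_of_nonneg (by linarith : (0:ℝ) ≤ T - t')]
  -- final combination
  have htotal : |v t' - v t| ≤ MK * δ + Dd * T := by
    rw [e3]
    refine (abs_sub _ _).trans ?_
    have h2 : Dd * (T - t') ≤ Dd * T := by nlinarith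
    linarith [bound1, bound2]
  refine htotal.trans ?_
  have hδs : δ ≤ Real.sqrt T * Real.sqrt δ := by
    have h1 : δ = Real.sqrt δ * Real.sqrt δ := (Real.mul_self_sqrt hδ0).symm
    have h2 : Real.sqrt δ ≤ Real.sqrt T := Real.sqrt_le_sqrt hδT
    nlinarith [Real.sqrt_nonneg δ]
  have hsqrtδ : Real.sqrt (t' - t) = Real.sqrt δ := by rw [hδdef]
  rw [hsqrtδ, hDddef, hD2def]
  have k1 : MK * δ ≤ MK * (Real.sqrt T * Real.sqrt δ) := mul_le_mul_of_nonneg_left hδs hMK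
  have k2 : (T * lam * MK) * δ ≤ (T * lam * MK) * (Real.sqrt T * Real.sqrt δ) :=
    mul_le_mul_of_nonneg_left hδs (by positivity)
  have k3 : (T * LK * |m|) * δ ≤ (T * LK * |m|) * (Real.sqrt T * Real.sqrt δ) :=
    mul_le_mul_of_nonneg_left hδs (by positivity)
  nlinarith [k1, k2, k3, Real.sqrt_nonneg δ, Real.sqrt_nonneg T]







lemma Knl_eq (μ r σ lam β ε : ℝ) (hβ : 0 ≤ β) (hε0 : 0 ≤ ε) (hε1 : ε < 1)
    (f : ℝ → ℝ → ℝ) (s z : ℝ) :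
    Knl μ r σ lam β ε f s z = (μ - r) * logistic z + r - σ^2 / 2 * (logistic z)^2
      + lam * ⨆ ζ : ℝ, (f s ζ - Afn β ε ζ z) := by
  unfold Knl
  have hb : (fun ζ : ℝ => f s ζ
      - Real.log ((1 + β * logistic ζ) / (1 + β * logistic z)) * (if z < ζ then 1 else 0)
      - Real.log ((1 - ε * logistic ζ) / (1 - ε * logistic z)) * (if ζ < z then 1 else 0))
      = fun ζ => f s ζ - Afn β ε ζ z := funext fun ζ => inner_eq hβ hε0 hε1 (f s) ζ z
  rw [hb]


end KH

open KH

/-- If `û` is the bounded continuous fixed point of `φ`, then `K_û` is jointly Hölder: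
`1/2`-Hölder in time and Lipschitz in space. -/
theorem Knl_fixed_point_holder (μ r σ lam T β ε : ℝ)
    (hσ : 0 < σ) (hlam : 0 < lam) (hT : 0 < T)
    (hβ : 0 ≤ β) (hε0 : 0 ≤ ε) (hε1 : ε < 1)
    (u : ℝ → ℝ → ℝ)
    (hcont : ContinuousOn (fun p : ℝ × ℝ => u p.1 p.2) (Icc 0 T ×ˢ univ))
    (hbdd : ∃ C : ℝ, ∀ t ∈ Icc (0:ℝ) T, ∀ z : ℝ, |u t z| ≤ C)
    (hfix : ∀ t ∈ Icc (0:ℝ) T, ∀ z : ℝ, phiMap μ r σ lam β ε T u t z = u t z) :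
    ∃ C : ℝ, 0 ≤ C ∧ ∀ t ∈ Icc (0:ℝ) T, ∀ t' ∈ Icc (0:ℝ) T, ∀ z z' : ℝ,
      |Knl μ r σ lam β ε u t' z' - Knl μ r σ lam β ε u t z|
        ≤ C * (Real.sqrt |t' - t| + |z' - z|) := by
  obtain ⟨C0, hC0⟩ := hbdd
  have hC00 : 0 ≤ C0 := le_trans (abs_nonneg _) (hC0 0 ⟨le_refl 0, hT.le⟩ 0)
  -- the projected, globally defined version of u
  have hproj_mem : ∀ s : ℝ, max (min s T) 0 ∈ Icc 0 T :=
    fun s => ⟨le_max_right _ _, max_le (min_le_right s T) hT.le⟩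
  have hproj_id : ∀ s ∈ Icc (0:ℝ) T, max (min s T) 0 = s := by
    intro s hs
    rw [min_eq_left hs.2, max_eq_left hs.1]
  set ut : ℝ → ℝ → ℝ := fun s ζ => u (max (min s T) 0) ζ with hutdef
  have hub : ∀ s ζ, |ut s ζ| ≤ C0 := fun s ζ => hC0 _ (hproj_mem s) ζ
  have hueq : ∀ s ∈ Icc (0:ℝ) T, ∀ ζ, ut s ζ = u s ζ := by
    intro s hs ζ
    rw [hutdef]
    simp only
    rw [hproj_id s hs]
  have hutc : Continuous fun p : ℝ × ℝ => ut p.1 p.2 := by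
    have hpc : Continuous fun p : ℝ × ℝ => ((max (min p.1 T) 0, p.2) : ℝ × ℝ) :=
      ((continuous_fst.min continuous_const).max continuous_const).prodMk continuous_snd
    exact hcont.comp_continuous hpc (fun p => ⟨hproj_mem p.1, mem_univ _⟩)
  set BA : ℝ := Real.log (1 + β) - Real.log (1 - ε) with hBAdef
  have hBA0 : 0 ≤ BA := by
    rw [hBAdef]
    have h1 : 0 ≤ Real.log (1 + β) := Real.log_nonneg (by linarith)
    have h2 : Real.log (1 - ε) ≤ 0 := Real.log_nonpos (by linarith) (by linarith)
    linarith
  have hbddf : ∀ s x ζ, |ut s ζ - Afn β ε ζ x| ≤ C0 + BA := by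
    intro s x ζ
    have h1 := abs_le.1 (hub s ζ)
    have h2 := abs_Afn_le hβ hε0 hε1 ζ x
    rw [← hBAdef] at h2
    have h2' := abs_le.1 h2
    rw [abs_le]
    constructor <;> linarith [h1.1, h1.2, h2'.1, h2'.2]
  have hbddA : ∀ s x, BddAbove (range fun ζ => ut s ζ - Afn β ε ζ x) :=
    fun s x => bddAbove_of_abs_le (hbddf s x)
  set K' : ℝ → ℝ → ℝ := fun s x => Knl μ r σ lam β ε ut s x with hK'def
  have hKrw : ∀ s x, K' s x = (μ - r) * logistic x + r - σ^2 / 2 * (logistic x)^2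
      + lam * ⨆ ζ : ℝ, (ut s ζ - Afn β ε ζ x) :=
    fun s x => Knl_eq μ r σ lam β ε hβ hε0 hε1 ut s x
  have hKnl_eq : ∀ s ∈ Icc (0:ℝ) T, ∀ x, Knl μ r σ lam β ε u s x = K' s x := by
    intro s hs x
    rw [hKrw s x, Knl_eq μ r σ lam β ε hβ hε0 hε1 u s x]
    have hfun : (fun ζ : ℝ => u s ζ - Afn β ε ζ x) = fun ζ => ut s ζ - Afn β ε ζ x :=
      funext fun ζ => by rw [hueq s hs ζ]
    rw [hfun]
  set MK : ℝ := |μ - r| + |r| + σ^2 / 2 + lam * (C0 + BA) with hMKdef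
  have hMK0 : 0 ≤ MK := by
    rw [hMKdef]
    have := mul_nonneg hlam.le (add_nonneg hC00 hBA0)
    positivity
  have hKb : ∀ s x, |K' s x| ≤ MK := by
    intro s x
    rw [hKrw s x]
    have hS := abs_le.1 (abs_ciSup_le (hbddf s x))
    have hl1 : lam * (⨆ ζ : ℝ, (ut s ζ - Afn β ε ζ x)) ≤ lam * (C0 + BA) :=
      mul_le_mul_of_nonneg_left hS.2 hlam.le
    have hl2 : -(lam * (C0 + BA)) ≤ lam * (⨆ ζ : ℝ, (ut s ζ - Afn β ε ζ x)) := by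
      have := mul_le_mul_of_nonneg_left hS.1 hlam.le
      linarith
    have h1a : -|μ - r| ≤ (μ - r) * logistic x ∧ (μ - r) * logistic x ≤ |μ - r| := by
      constructor <;>
        nlinarith [logistic_pos x, logistic_lt_one x, le_abs_self (μ - r), neg_abs_le (μ - r)]
    have hh2 : (logistic x)^2 ≤ 1 := by nlinarith [logistic_pos x, logistic_lt_one x]
    have h2a : 0 ≤ σ^2 / 2 * (logistic x)^2 ∧ σ^2 / 2 * (logistic x)^2 ≤ σ^2 / 2 :=
      ⟨by positivity, by nlinarith [sq_nonneg σ]⟩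
    have hr := abs_le.1 (le_refl |r|)
    rw [hMKdef, abs_le]
    constructor <;> nlinarith [h1a.1, h1a.2, h2a.1, h2a.2, le_abs_self r, neg_abs_le r]
  set LK : ℝ := |μ - r| + σ^2 + lam * (β + ε / (1 - ε)) with hLKdef
  have hLK0 : 0 ≤ LK := by
    rw [hLKdef]
    have h1 : 0 ≤ ε / (1 - ε) := div_nonneg hε0 (by linarith)
    have := mul_nonneg hlam.le (add_nonneg hβ h1)
    positivity
  have hKlip : ∀ s x x', |K' s x' - K' s x| ≤ LK * |x' - x| := by
    intro s x x'
    rw [hKrw s x', hKrw s x]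
    have hS : |(⨆ ζ : ℝ, (ut s ζ - Afn β ε ζ x')) - ⨆ ζ : ℝ, (ut s ζ - Afn β ε ζ x)|
        ≤ (β + ε / (1 - ε)) * |x' - x| := by
      apply ciSup_abs_sub (hbddA s x') (hbddA s x)
      intro ζ
      have he : (ut s ζ - Afn β ε ζ x') - (ut s ζ - Afn β ε ζ x)
          = Afn β ε ζ x - Afn β ε ζ x' := by ring
      rw [he]
      have := abs_Afn_sub hβ hε0 hε1 ζ x' x
      rwa [abs_sub_comm x x'] at this
    have h1 : |(μ - r) * (logistic x' - logistic x)| ≤ |μ - r| * |x' - x| := by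
      rw [abs_mul]
      exact mul_le_mul_of_nonneg_left (abs_logistic_sub x' x) (abs_nonneg _)
    have h2 : |σ^2 / 2 * ((logistic x')^2 - (logistic x)^2)| ≤ σ^2 * |x' - x| := by
      rw [abs_mul, abs_of_nonneg (by positivity : (0:ℝ) ≤ σ^2/2)]
      have hf : (logistic x')^2 - (logistic x)^2
          = (logistic x' + logistic x) * (logistic x' - logistic x) := by ring
      rw [hf, abs_mul]
      have hb1 : |logistic x' + logistic x| ≤ 2 := by
        rw [abs_le]
        constructor <;> nlinarith [logistic_pos x, logistic_pos x',
          logistic_lt_one x, logistic_lt_one x']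
      have := mul_le_mul hb1 (abs_logistic_sub x' x) (abs_nonneg _) (by norm_num)
      nlinarith [abs_nonneg (logistic x' - logistic x), abs_nonneg (x' - x)]
    have hl := mul_le_mul_of_nonneg_left hS hlam.le
    have hde : ((μ - r) * logistic x' + r - σ^2 / 2 * (logistic x')^2
          + lam * ⨆ ζ : ℝ, (ut s ζ - Afn β ε ζ x'))
        - ((μ - r) * logistic x + r - σ^2 / 2 * (logistic x)^2
          + lam * ⨆ ζ : ℝ, (ut s ζ - Afn β ε ζ x))
        = (μ - r) * (logistic x' - logistic x)
          - σ^2 / 2 * ((logistic x')^2 - (logistic x)^2)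
          + lam * ((⨆ ζ : ℝ, (ut s ζ - Afn β ε ζ x')) - ⨆ ζ : ℝ, (ut s ζ - Afn β ε ζ x)) := by
      ring
    rw [hde, hLKdef]
    have htri := abs_add_le ((μ - r) * (logistic x' - logistic x)
        - σ^2 / 2 * ((logistic x')^2 - (logistic x)^2))
      (lam * ((⨆ ζ : ℝ, (ut s ζ - Afn β ε ζ x')) - ⨆ ζ : ℝ, (ut s ζ - Afn β ε ζ x)))
    have htri2 := abs_sub ((μ - r) * (logistic x' - logistic x))
      (σ^2 / 2 * ((logistic x')^2 - (logistic x)^2))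
    have hlab : |lam * ((⨆ ζ : ℝ, (ut s ζ - Afn β ε ζ x')) - ⨆ ζ : ℝ, (ut s ζ - Afn β ε ζ x))|
        ≤ lam * ((β + ε / (1 - ε)) * |x' - x|) := by
      rw [abs_mul, abs_of_nonneg hlam.le]
      exact mul_le_mul_of_nonneg_left hS hlam.le
    nlinarith [htri, htri2, h1, h2, hlab]
  -- joint measurability of K'
  have hlogc : Continuous logistic := by
    unfold logistic
    exact Real.continuous_exp.div (by continuity) (fun x => ne_of_gt (one_add_exp_pos x))
  have hb1c : Continuous (b1 β) := by
    unfold b1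
    apply Continuous.log (continuous_const.add (continuous_const.mul hlogc))
    intro y
    exact ne_of_gt (lt_of_lt_of_le one_pos (one_le_b1_arg hβ y))
  have hb2c : Continuous (b2 ε) := by
    unfold b2
    apply Continuous.log (continuous_const.sub (continuous_const.mul hlogc))
    intro y
    exact ne_of_gt (lt_of_lt_of_le (by linarith : (0:ℝ) < 1 - ε) (b2_arg_ge hε0 hε1 y))
  have hAc : Continuous fun p : ℝ × ℝ => Afn β ε p.1 p.2 := by
    unfold Afn
    exact ((hb1c.comp continuous_fst).sub
        (hb1c.comp (continuous_snd.min continuous_fst))).add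
      ((hb2c.comp continuous_fst).sub (hb2c.comp (continuous_snd.max continuous_fst)))
  have hratq : ∀ s x, (⨆ ζ : ℝ, (ut s ζ - Afn β ε ζ x))
      = ⨆ q : ℚ, (ut s (q:ℝ) - Afn β ε (q:ℝ) x) := by
    intro s x
    apply ciSup_rat_eq
    · have h1 : Continuous fun ζ : ℝ => ut s ζ := by
        have he : (fun ζ : ℝ => ut s ζ)
            = (fun p : ℝ × ℝ => ut p.1 p.2) ∘ (fun ζ : ℝ => ((s, ζ) : ℝ × ℝ)) := rfl
        rw [he]
        exact hutc.comp (continuous_const.prodMk continuous_id)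
      have h2 : Continuous fun ζ : ℝ => Afn β ε ζ x := by
        have he : (fun ζ : ℝ => Afn β ε ζ x)
            = (fun p : ℝ × ℝ => Afn β ε p.1 p.2) ∘ (fun ζ : ℝ => ((ζ, x) : ℝ × ℝ)) := rfl
        rw [he]
        exact hAc.comp (continuous_id.prodMk continuous_const)
      exact h1.sub h2
    · exact hbddA s x
  have hKmeas : Measurable fun p : ℝ × ℝ => K' p.1 p.2 := by
    have hfe : (fun p : ℝ × ℝ => K' p.1 p.2)
        = fun p : ℝ × ℝ => (μ - r) * logistic p.2 + r - σ^2 / 2 * (logistic p.2)^2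
          + lam * ⨆ q : ℚ, (ut p.1 (q:ℝ) - Afn β ε (q:ℝ) p.2) :=
      funext fun p => by rw [hKrw p.1 p.2, hratq p.1 p.2]
    rw [hfe]
    have hbase : Measurable fun p : ℝ × ℝ =>
        (μ - r) * logistic p.2 + r - σ^2 / 2 * (logistic p.2)^2 := by
      apply Continuous.measurable
      exact ((continuous_const.mul (hlogc.comp continuous_snd)).add continuous_const).sub
        (continuous_const.mul ((hlogc.comp continuous_snd).pow 2))
    apply Measurable.add hbase
    apply Measurable.const_mul
    apply Measurable.iSup
    intro q
    apply Continuous.measurable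
    have h1 : Continuous fun p : ℝ × ℝ => ut p.1 (q:ℝ) := by
      have he : (fun p : ℝ × ℝ => ut p.1 (q:ℝ))
          = (fun p : ℝ × ℝ => ut p.1 p.2) ∘ (fun p : ℝ × ℝ => ((p.1, (q:ℝ)) : ℝ × ℝ)) := rfl
      rw [he]
      exact hutc.comp (continuous_fst.prodMk continuous_const)
    have h2 : Continuous fun p : ℝ × ℝ => Afn β ε (q:ℝ) p.2 := by
      have he : (fun p : ℝ × ℝ => Afn β ε (q:ℝ) p.2)
          = (fun p : ℝ × ℝ => Afn β ε p.1 p.2) ∘ (fun p : ℝ × ℝ => (((q:ℝ), p.2) : ℝ × ℝ)) := rfl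
      rw [he]
      exact hAc.comp (continuous_const.prodMk continuous_snd)
    exact h1.sub h2
  -- time modulus of u
  set Cu : ℝ := Real.sqrt T * (MK + T * (lam * MK + LK * |μ - r - σ^2 / 2|))
      + T * LK * σ * Cgauss with hCudef
  have hCu0 : 0 ≤ Cu := by
    rw [hCudef]
    have h1 : 0 ≤ lam * MK + LK * |μ - r - σ^2 / 2| :=
      add_nonneg (mul_nonneg hlam.le hMK0) (mul_nonneg hLK0 (abs_nonneg _))
    exact add_nonneg (mul_nonneg (Real.sqrt_nonneg T)
        (add_nonneg hMK0 (mul_nonneg hT.le h1)))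
      (mul_nonneg (mul_nonneg (mul_nonneg hT.le hLK0) hσ.le) Cgauss_nonneg)
  have htime : ∀ t ∈ Icc (0:ℝ) T, ∀ t' ∈ Icc (0:ℝ) T, ∀ ζ : ℝ,
      |u t' ζ - u t ζ| ≤ Cu * Real.sqrt |t' - t| := by
    have key : ∀ t ∈ Icc (0:ℝ) T, ∀ t' ∈ Icc (0:ℝ) T, t ≤ t' → ∀ ζ : ℝ,
        |u t' ζ - u t ζ| ≤ Cu * Real.sqrt (t' - t) := by
      intro t ht t' ht' htt' ζ
      have hv : ∀ a ∈ Icc (0:ℝ) T, (fun b => u b ζ) a = ∫ s in a..T,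
          Real.exp (-lam * (s - a)) * ∫ w, K' s
            (ζ + (μ - r - σ^2 / 2) * (s - a) + σ * Real.sqrt (s - a) * w)
          ∂(gaussianReal 0 1) := by
        intro a ha
        simp only
        rw [← hfix a ha ζ]
        unfold phiMap
        apply intervalIntegral.integral_congr
        intro s hs
        rw [uIcc_of_le ha.2] at hs
        have hsI : s ∈ Icc (0:ℝ) T := ⟨le_trans ha.1 hs.1, hs.2⟩
        simp only
        have hfun : (fun w : ℝ => Knl μ r σ lam β ε u s
            (ζ + (μ - r - σ^2 / 2) * (s - a) + σ * Real.sqrt (s - a) * w))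
            = fun w : ℝ => K' s (ζ + (μ - r - σ^2 / 2) * (s - a) + σ * Real.sqrt (s - a) * w) :=
          funext fun w => hKnl_eq s hsI _
        rw [hfun]
      have happ := u_time_mod σ lam T (μ - r - σ^2 / 2) MK LK hσ.le hlam hT hMK0 hLK0
        K' hKmeas hKb hKlip ζ (fun b => u b ζ) hv ht ht' htt'
      rw [← hCudef] at happ
      exact happ
    intro t ht t' ht' ζ
    rcases le_total t t' with h | h
    · rw [abs_of_nonneg (sub_nonneg.2 h)]
      exact key t ht t' ht' h ζ
    · rw [abs_sub_comm t' t, abs_of_nonneg (sub_nonneg.2 h), abs_sub_comm (u t' ζ) (u t ζ)]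
      exact key t' ht' t ht h ζ
  -- bddAbove for the u-families
  have hbu : ∀ a ∈ Icc (0:ℝ) T, ∀ x : ℝ, BddAbove (range fun ζ => u a ζ - Afn β ε ζ x) := by
    intro a ha x
    have hfun : (fun ζ : ℝ => u a ζ - Afn β ε ζ x) = fun ζ => ut a ζ - Afn β ε ζ x :=
      funext fun ζ => by rw [hueq a ha ζ]
    rw [hfun]
    exact hbddA a x
  refine ⟨max LK (lam * Cu), le_trans hLK0 (le_max_left _ _), ?_⟩
  intro t ht t' ht' z z'
  have hA : |Knl μ r σ lam β ε u t' z' - Knl μ r σ lam β ε u t' z| ≤ LK * |z' - z| := by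
    rw [hKnl_eq t' ht' z', hKnl_eq t' ht' z]
    exact hKlip t' z z'
  have hB : |Knl μ r σ lam β ε u t' z - Knl μ r σ lam β ε u t z|
      ≤ lam * (Cu * Real.sqrt |t' - t|) := by
    rw [Knl_eq μ r σ lam β ε hβ hε0 hε1 u t' z, Knl_eq μ r σ lam β ε hβ hε0 hε1 u t z]
    have hde : ((μ - r) * logistic z + r - σ^2 / 2 * (logistic z)^2
          + lam * ⨆ ζ : ℝ, (u t' ζ - Afn β ε ζ z))
        - ((μ - r) * logistic z + r - σ^2 / 2 * (logistic z)^2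
          + lam * ⨆ ζ : ℝ, (u t ζ - Afn β ε ζ z))
        = lam * ((⨆ ζ : ℝ, (u t' ζ - Afn β ε ζ z)) - ⨆ ζ : ℝ, (u t ζ - Afn β ε ζ z)) := by
      ring
    rw [hde, abs_mul, abs_of_nonneg hlam.le]
    apply mul_le_mul_of_nonneg_left _ hlam.le
    apply ciSup_abs_sub (hbu t' ht' z) (hbu t ht z)
    intro ζ
    have he : (u t' ζ - Afn β ε ζ z) - (u t ζ - Afn β ε ζ z) = u t' ζ - u t ζ := by ring
    rw [he]
    exact htime t ht t' ht' ζ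
  have htri := abs_sub_le (Knl μ r σ lam β ε u t' z') (Knl μ r σ lam β ε u t' z)
    (Knl μ r σ lam β ε u t z)
  have m1 : LK ≤ max LK (lam * Cu) := le_max_left _ _
  have m2 : lam * Cu ≤ max LK (lam * Cu) := le_max_right _ _
  have hs0 : 0 ≤ Real.sqrt |t' - t| := Real.sqrt_nonneg _
  have hz0 : 0 ≤ |z' - z| := abs_nonneg _
  nlinarith [htri, hA, hB, mul_le_mul_of_nonneg_right m1 hz0,
    mul_le_mul_of_nonneg_right m2 hs0]
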